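/- (Generator Lemma, second part) Let G be a finite group and C = (C_1,…,C_{2u}) a 2u-tuple of conjugacy classes of G. Suppose that for every tuple (g_1,…,g_u) ∈ G^u with [g_1,…,g_u] ∈ ni(G,C) and every i ∈ {1,…,u}, the elements g_1,…,g_{i−1},g_{i+1},…,g_u already generate G. Then any two tuples of the form [g_1,…,g_u] lying in ni(G,C) are braid equivalent; i.e., all H-M representatives of ni(G,C) fall in one braid orbit. -/

import Mathlib

/-- Elementary braid move: replace adjacent entries `(a, b)` by `(a * b * a⁻¹, a)`. -/
def BraidMove {G : Type*} [Group G] (x y : List G) : Prop :=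
  ∃ (l₁ l₂ : List G) (a b : G),
    x = l₁ ++ a :: b :: l₂ ∧ y = l₁ ++ (a * b * a⁻¹) :: a :: l₂

/-- Braid equivalence: the equivalence relation generated by elementary braid moves. -/
def BraidEquiv {G : Type*} [Group G] : List G → List G → Prop :=
  Relation.EqvGen BraidMove

/-- The bracket tuple `[g_1, …, g_u] = (g_1, …, g_u, g_u⁻¹, …, g_1⁻¹)`. -/
def hmBracket {G : Type*} [Group G] (l : List G) : List G :=
  l ++ l.reverse.map (fun x => x⁻¹)

/-- The Nielsen class `ni(G, C)` for a tuple `C` of conjugacy classes of `G`: tuples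
with product 1, generating `G`, whose entries represent the classes `C` in some order. -/
def NielsenC {G : Type*} [Group G] (C : List (ConjClasses G)) (l : List G) : Prop :=
  l.prod = 1 ∧ Subgroup.closure {x | x ∈ l} = ⊤ ∧ (l.map ConjClasses.mk).Perm C

/-!
Identify a half-tuple `l` with its H-M representative `[l] = hmBracket l`. Braid moves on `[l]`
realize, on `l` itself: braid moves within `l`, rotation, inversion of the last entry, and
conjugation of the last entry `a` by any element of the group generated by the other entries
(the adjacent pair `(a, a⁻¹)` can travel through the tuple and comes back conjugated by each entry
it passes). Since `[L]` and `[M]` carry the same classes, the last entry `m` of `M` is conjugate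
to `a` or `a⁻¹` for some entry `a` of `L`. Slide `a` to the end of `L`; by hypothesis the other
entries generate `G`, so `a` can be turned into `m`. Rotating `m` to the front of both tuples, induct
on the number of entries not yet matched.
-/

open Subgroup

section

variable {G : Type*} [Group G]

namespace BraidEquiv

theorem refl (x : List G) : BraidEquiv x x := Relation.EqvGen.refl x

theorem symm {x y : List G} (h : BraidEquiv x y) : BraidEquiv y x := Relation.EqvGen.symm _ _ h

theorem trans {x y z : List G} (h : BraidEquiv x y) (h' : BraidEquiv y z) : BraidEquiv x z :=
  Relation.EqvGen.trans _ _ _ h h'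

instance : @Trans (List G) (List G) (List G) BraidEquiv BraidEquiv BraidEquiv := ⟨trans⟩

theorem move (p q : List G) (a b : G) :
    BraidEquiv (p ++ a :: b :: q) (p ++ (a * b * a⁻¹) :: a :: q) :=
  Relation.EqvGen.rel _ _ ⟨p, q, a, b, rfl, rfl⟩

theorem move_inv (p q : List G) (a b : G) :
    BraidEquiv (p ++ a :: b :: q) (p ++ b :: (b⁻¹ * a * b) :: q) := by
  have h := (move p q b (b⁻¹ * a * b)).symm
  rwa [show b * (b⁻¹ * a * b) * b⁻¹ = a by group] at h

theorem cons {x y : List G} (h : BraidEquiv x y) (a : G) : BraidEquiv (a :: x) (a :: y) := by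
  induction h with
  | rel x y hxy =>
    obtain ⟨l₁, l₂, b, c, rfl, rfl⟩ := hxy
    exact move (a :: l₁) l₂ b c
  | refl x => exact refl _
  | symm x y _ ih => exact ih.symm
  | trans x y z _ _ ih₁ ih₂ => exact ih₁.trans ih₂

theorem cons_rotate_conj (s : List G) (b : G) :
    BraidEquiv (b :: s) (s ++ [s.prod⁻¹ * b * s.prod]) := by
  induction s generalizing b with
  | nil => simpa using refl [b]
  | cons c s ih =>
    calc BraidEquiv (b :: c :: s) (c :: (c⁻¹ * b * c) :: s) := move_inv [] s b c
      BraidEquiv _ (c :: (s ++ [s.prod⁻¹ * (c⁻¹ * b * c) * s.prod])) := (ih _).cons c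
      _ = c :: s ++ [(c :: s).prod⁻¹ * b * (c :: s).prod] := by simp [mul_assoc]

theorem pair_swap (p q : List G) (a b : G) :
    BraidEquiv (p ++ a :: a⁻¹ :: b :: q) (p ++ b :: a :: a⁻¹ :: q) :=
  calc BraidEquiv (p ++ a :: a⁻¹ :: b :: q) (p ++ [a] ++ (a⁻¹ * b * a⁻¹⁻¹) :: a⁻¹ :: q) := by
        simpa using move (p ++ [a]) q a⁻¹ b
    _ = p ++ a :: (a⁻¹ * b * a) :: a⁻¹ :: q := by simp
    BraidEquiv _ (p ++ (a * (a⁻¹ * b * a) * a⁻¹) :: a :: a⁻¹ :: q) := move p (a⁻¹ :: q) a _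
    _ = p ++ b :: a :: a⁻¹ :: q := by group

theorem pair_conj (p q : List G) (a b : G) :
    BraidEquiv (p ++ b :: a :: a⁻¹ :: q) (p ++ (b * a * b⁻¹) :: (b * a * b⁻¹)⁻¹ :: b :: q) :=
  calc BraidEquiv (p ++ b :: a :: a⁻¹ :: q) (p ++ [b * a * b⁻¹] ++ b :: a⁻¹ :: q) := by
        simpa using move p (a⁻¹ :: q) b a
    BraidEquiv _ (p ++ [b * a * b⁻¹] ++ (b * a⁻¹ * b⁻¹) :: b :: q) := move _ q b a⁻¹
    _ = p ++ (b * a * b⁻¹) :: (b * a * b⁻¹)⁻¹ :: b :: q := by simp [mul_assoc]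

theorem pair_slide (p m : List G) (a : G) (q : List G) :
    BraidEquiv (p ++ m ++ a :: a⁻¹ :: q) (p ++ a :: a⁻¹ :: (m ++ q)) := by
  induction m generalizing p with
  | nil => simpa using refl (p ++ a :: a⁻¹ :: q)
  | cons b m ih =>
    calc BraidEquiv (p ++ b :: m ++ a :: a⁻¹ :: q) (p ++ b :: a :: a⁻¹ :: (m ++ q)) := by
          simpa using ih (p ++ [b])
      BraidEquiv _ (p ++ a :: a⁻¹ :: b :: (m ++ q)) := (pair_swap p _ a b).symm

theorem pair_conj_of_mem {p : List G} {y : G} (hy : y ∈ p) (q : List G) (a : G) :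
    BraidEquiv (p ++ a :: a⁻¹ :: q) (p ++ (y * a * y⁻¹) :: (y * a * y⁻¹)⁻¹ :: q) := by
  obtain ⟨p₁, p₂, rfl⟩ := List.append_of_mem hy
  set c := y * a * y⁻¹
  calc BraidEquiv (p₁ ++ y :: p₂ ++ a :: a⁻¹ :: q) (p₁ ++ y :: a :: a⁻¹ :: (p₂ ++ q)) := by
        simpa using pair_slide (p₁ ++ [y]) p₂ a q
    BraidEquiv _ (p₁ ++ c :: c⁻¹ :: y :: (p₂ ++ q)) := pair_conj p₁ _ a y
    BraidEquiv _ (p₁ ++ y :: c :: c⁻¹ :: (p₂ ++ q)) := pair_swap p₁ _ c y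
    BraidEquiv _ (p₁ ++ y :: p₂ ++ c :: c⁻¹ :: q) := by
      simpa using (pair_slide (p₁ ++ [y]) p₂ c q).symm

theorem pair_conj_of_mem_closure {p : List G} {x : G} (hx : x ∈ closure {z | z ∈ p})
    (q : List G) (a : G) :
    BraidEquiv (p ++ a :: a⁻¹ :: q) (p ++ (x * a * x⁻¹) :: (x * a * x⁻¹)⁻¹ :: q) := by
  induction hx using closure_induction generalizing a with
  | mem y hy => exact pair_conj_of_mem hy q a
  | one => simpa using refl (p ++ a :: a⁻¹ :: q)
  | mul x y _ _ ihx ihy =>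
    have h := (ihy a).trans (ihx (y * a * y⁻¹))
    rwa [show x * (y * a * y⁻¹) * x⁻¹ = x * y * a * (x * y)⁻¹ by group] at h
  | inv x _ ih =>
    have h := (ih (x⁻¹ * a * x)).symm
    rw [show x * (x⁻¹ * a * x) * x⁻¹ = a by group] at h
    simpa using h

end BraidEquiv

theorem hmBracket_append_singleton (p : List G) (a : G) :
    hmBracket (p ++ [a]) = p ++ a :: a⁻¹ :: p.reverse.map (·⁻¹) := by
  simp [hmBracket]

theorem hmBracket_cons (a : G) (l : List G) :
    hmBracket (a :: l) = a :: (hmBracket l ++ [a⁻¹]) := by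
  simp [hmBracket]

theorem prod_hmBracket (l : List G) : (hmBracket l).prod = 1 := by
  rw [hmBracket, List.prod_append, List.map_reverse, ← List.prod_inv_reverse, mul_inv_cancel]

theorem length_hmBracket (l : List G) : (hmBracket l).length = 2 * l.length := by
  simp [hmBracket]; ring

theorem hmBracket_append_perm (k l : List G) :
    (hmBracket (k ++ l)).Perm (hmBracket k ++ hmBracket l) := by
  simp only [hmBracket, List.reverse_append, List.map_append, List.append_assoc,
    List.perm_append_left_iff]
  rw [← List.append_assoc]
  exact List.perm_append_comm

def HMEquiv (l m : List G) : Prop := BraidEquiv (hmBracket l) (hmBracket m)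

namespace HMEquiv

theorem refl (l : List G) : HMEquiv l l := BraidEquiv.refl _

theorem symm {l m : List G} (h : HMEquiv l m) : HMEquiv m l := BraidEquiv.symm h

theorem trans {l m n : List G} (h : HMEquiv l m) (h' : HMEquiv m n) : HMEquiv l n :=
  BraidEquiv.trans h h'

instance : @Trans (List G) (List G) (List G) HMEquiv HMEquiv HMEquiv := ⟨trans⟩

theorem inv_last (p : List G) (a : G) : HMEquiv (p ++ [a]) (p ++ [a⁻¹]) := by
  simpa [HMEquiv, hmBracket_append_singleton] using
    BraidEquiv.move p (p.reverse.map (·⁻¹)) a a⁻¹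

theorem conj_last {p : List G} {x : G} (hx : x ∈ closure {z | z ∈ p}) (a : G) :
    HMEquiv (p ++ [a]) (p ++ [x * a * x⁻¹]) := by
  simpa only [HMEquiv, hmBracket_append_singleton] using
    BraidEquiv.pair_conj_of_mem_closure hx _ a

theorem move (l₁ l₂ : List G) (a b : G) :
    HMEquiv (l₁ ++ a :: b :: l₂) (l₁ ++ (a * b * a⁻¹) :: a :: l₂) := by
  set R : List G → List G := fun l => l.reverse.map (·⁻¹)
  set c := a * b * a⁻¹
  unfold HMEquiv
  calc hmBracket (l₁ ++ a :: b :: l₂)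
        = l₁ ++ a :: b :: (l₂ ++ R l₂ ++ b⁻¹ :: a⁻¹ :: R l₁) := by simp [hmBracket, R]
    BraidEquiv _ (l₁ ++ c :: a :: (l₂ ++ R l₂) ++ b⁻¹ :: a⁻¹ :: R l₁) := by
      simpa using BraidEquiv.move l₁ _ a b
    BraidEquiv _ (l₁ ++ c :: a :: (l₂ ++ R l₂) ++ a⁻¹ :: (a * b⁻¹ * a⁻¹) :: R l₁) := by
      simpa [mul_assoc] using BraidEquiv.move_inv (l₁ ++ c :: a :: (l₂ ++ R l₂)) (R l₁) b⁻¹ a⁻¹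
    _ = hmBracket (l₁ ++ c :: a :: l₂) := by simp [hmBracket, R, c, mul_assoc]

theorem slide_to_end (a : G) (l₂ l₁ : List G) :
    HMEquiv (l₁ ++ a :: l₂) (l₁ ++ l₂.map (a * · * a⁻¹) ++ [a]) := by
  induction l₂ generalizing l₁ with
  | nil => simpa using refl (l₁ ++ [a])
  | cons b l₂ ih =>
    calc HMEquiv (l₁ ++ a :: b :: l₂) (l₁ ++ (a * b * a⁻¹) :: a :: l₂) := move l₁ l₂ a b
      HMEquiv _ (l₁ ++ (b :: l₂).map (a * · * a⁻¹) ++ [a]) := by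
        simpa using ih (l₁ ++ [a * b * a⁻¹])

theorem concat_cons (l : List G) (a : G) : HMEquiv (l ++ [a]) (a :: l) := by
  unfold HMEquiv
  calc hmBracket (l ++ [a]) = [] ++ l ++ a :: a⁻¹ :: l.reverse.map (·⁻¹) := by
        simp [hmBracket_append_singleton]
    BraidEquiv _ ([] ++ a :: a⁻¹ :: (l ++ l.reverse.map (·⁻¹))) :=
      BraidEquiv.pair_slide [] l a _
    _ = a :: a⁻¹ :: hmBracket l := rfl
    BraidEquiv _ (a :: (hmBracket l ++ [a⁻¹])) := by
      simpa [prod_hmBracket] using (BraidEquiv.cons_rotate_conj (hmBracket l) a⁻¹).cons a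
    _ = hmBracket (a :: l) := (hmBracket_cons a l).symm

end HMEquiv

namespace BraidMove

variable {x y : List G}

theorem prod_eq (h : BraidMove x y) : x.prod = y.prod := by
  obtain ⟨l₁, l₂, a, b, rfl, rfl⟩ := h
  simp [mul_assoc]

theorem closure_eq (h : BraidMove x y) : closure {z | z ∈ x} = closure {z | z ∈ y} := by
  obtain ⟨l₁, l₂, a, b, rfl, rfl⟩ := h
  have mem {l : List G} {z : G} (hz : z ∈ l) : z ∈ closure {w | w ∈ l} := subset_closure hz
  apply le_antisymm <;> refine (closure_le _).mpr fun z hz => ?_ <;>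
    simp only [Set.mem_ofPred_eq, List.mem_append, List.mem_cons] at hz
  · rcases hz with hz | rfl | rfl | hz
    · exact mem (by simp [hz])
    · exact mem (by simp)
    · have key : a⁻¹ * (a * z * a⁻¹) * a ∈ closure {w | w ∈ l₁ ++ (a * z * a⁻¹) :: a :: l₂} :=
        mul_mem (mul_mem (inv_mem (mem (by simp))) (mem (by simp))) (mem (by simp))
      simpa [mul_assoc] using key
    · exact mem (by simp [hz])
  · rcases hz with hz | rfl | rfl | hz
    · exact mem (by simp [hz])
    · exact mul_mem (mul_mem (mem (by simp)) (mem (by simp))) (inv_mem (mem (by simp)))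
    · exact mem (by simp)
    · exact mem (by simp [hz])

theorem perm_map_conjClassesMk (h : BraidMove x y) :
    (x.map ConjClasses.mk).Perm (y.map ConjClasses.mk) := by
  obtain ⟨l₁, l₂, a, b, rfl, rfl⟩ := h
  have hb : ConjClasses.mk (a * b * a⁻¹) = ConjClasses.mk b :=
    ConjClasses.mk_eq_mk_iff_isConj.mpr (isConj_iff.mpr ⟨a⁻¹, by group⟩)
  simpa [hb] using ((List.Perm.swap _ _ _).append_left _)

theorem nielsenC_iff (h : BraidMove x y) (C : List (ConjClasses G)) :
    NielsenC C x ↔ NielsenC C y := by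
  rw [NielsenC, NielsenC, h.prod_eq, h.closure_eq, h.perm_map_conjClassesMk.congr_left]

end BraidMove

theorem BraidEquiv.nielsenC_iff {x y : List G} (h : BraidEquiv x y) (C : List (ConjClasses G)) :
    NielsenC C x ↔ NielsenC C y := by
  induction h with
  | rel x y hxy => exact hxy.nielsenC_iff C
  | refl x => exact Iff.rfl
  | symm x y _ ih => exact ih.symm
  | trans x y z _ _ ih₁ ih₂ => exact ih₁.trans ih₂

theorem HMEquiv.nielsenC {C : List (ConjClasses G)} {l m : List G} (h : HMEquiv l m)
    (hl : NielsenC C (hmBracket l)) : NielsenC C (hmBracket m) :=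
  (BraidEquiv.nielsenC_iff h C).mp hl

theorem HMEquiv.concat_of_isConj {p : List G} (hp : closure {z | z ∈ p} = ⊤) {a m : G}
    (ham : IsConj a m ∨ IsConj a⁻¹ m) : HMEquiv (p ++ [a]) (p ++ [m]) := by
  have of_isConj (b : G) (hb : IsConj b m) : HMEquiv (p ++ [b]) (p ++ [m]) := by
    obtain ⟨x, rfl⟩ := isConj_iff.mp hb
    exact conj_last (hp ▸ mem_top x) b
  rcases ham with ham | ham
  · exact of_isConj a ham
  · exact (inv_last p a).trans (of_isConj a⁻¹ ham)

theorem exists_isConj_of_nielsenC {C : List (ConjClasses G)} {k L M : List G}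
    (hL : NielsenC C (hmBracket (k ++ L))) (hM : NielsenC C (hmBracket (k ++ M)))
    {m : G} (hm : m ∈ M) : ∃ a ∈ L, IsConj a m ∨ IsConj a⁻¹ m := by
  have hperm : ((hmBracket L).map ConjClasses.mk).Perm ((hmBracket M).map ConjClasses.mk) := by
    have h := (((hmBracket_append_perm k L).map _).symm.trans hL.2.2).trans
      (((hmBracket_append_perm k M).map _).symm.trans hM.2.2).symm
    rwa [List.map_append, List.map_append, List.perm_append_left_iff] at h
  obtain ⟨x, hx, hxm⟩ := List.mem_map.mp <|
    hperm.mem_iff.mpr (List.mem_map_of_mem (List.mem_append_left _ hm))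
  rw [ConjClasses.mk_eq_mk_iff_isConj] at hxm
  simp only [hmBracket, List.mem_append, List.mem_reverse, List.mem_map] at hx
  rcases hx with hx | ⟨a, ha, rfl⟩
  · exact ⟨x, hx, Or.inl hxm⟩
  · exact ⟨a, ha, Or.inr hxm⟩

theorem closure_eq_top_of_nielsenC_concat {u : ℕ} {C : List (ConjClasses G)}
    (hC : C.length = 2 * u)
    (hyp : ∀ g : Fin u → G, NielsenC C (hmBracket (List.ofFn g)) →
      ∀ i : Fin u, closure (g '' {j | j ≠ i}) = ⊤)
    {p : List G} {a : G} (h : NielsenC C (hmBracket (p ++ [a]))) :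
    closure {z | z ∈ p} = ⊤ := by
  have hlen : (p ++ [a]).length = u := by
    have := h.2.2.length_eq
    rw [List.length_map, length_hmBracket] at this
    omega
  subst hlen
  have htop := hyp (p ++ [a]).get (by rwa [List.ofFn_get]) ⟨p.length, by simp⟩
  rw [eq_top_iff, ← htop]
  refine closure_mono ?_
  rintro _ ⟨j, hj, rfl⟩
  have hj : j.val < p.length := by
    have := j.isLt
    have := Fin.val_ne_of_ne hj
    simp only [List.length_append, List.length_singleton] at *
    omega
  simp [List.getElem_append_left hj]

theorem exists_hmEquiv_cons_of_nielsenC {C : List (ConjClasses G)}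
    (hgen : ∀ (p : List G) (a : G), NielsenC C (hmBracket (p ++ [a])) → closure {z | z ∈ p} = ⊤)
    {k L : List G} (hL : NielsenC C (hmBracket (k ++ L))) {m : G}
    (hm : ∃ a ∈ L, IsConj a m ∨ IsConj a⁻¹ m) :
    ∃ A : List G, A.length + 1 = L.length ∧ HMEquiv (k ++ L) (m :: (k ++ A)) := by
  obtain ⟨a, ha, ham⟩ := hm
  obtain ⟨l₁, l₂, rfl⟩ := List.append_of_mem ha
  set A := l₁ ++ l₂.map (a * · * a⁻¹)
  have hslide : HMEquiv (k ++ (l₁ ++ a :: l₂)) (k ++ A ++ [a]) := by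
    simpa [A] using HMEquiv.slide_to_end a l₂ (k ++ l₁)
  refine ⟨A, by simp [A, add_assoc], ?_⟩
  calc HMEquiv (k ++ (l₁ ++ a :: l₂)) (k ++ A ++ [a]) := hslide
    HMEquiv _ (k ++ A ++ [m]) := .concat_of_isConj (hgen _ a (hslide.nielsenC hL)) ham
    HMEquiv _ (m :: (k ++ A)) := .concat_cons _ m

theorem hmEquiv_append_of_nielsenC {C : List (ConjClasses G)}
    (hgen : ∀ (p : List G) (a : G), NielsenC C (hmBracket (p ++ [a])) → closure {z | z ∈ p} = ⊤)
    (n : ℕ) : ∀ k L M : List G, L.length = n → M.length = n →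
      NielsenC C (hmBracket (k ++ L)) → NielsenC C (hmBracket (k ++ M)) →
      HMEquiv (k ++ L) (k ++ M) := by
  induction n with
  | zero =>
    intro k L M hL hM _ _
    rw [List.length_eq_zero_iff.mp hL, List.length_eq_zero_iff.mp hM]
    exact .refl _
  | succ n ih =>
    intro k L M hLlen hMlen hL hM
    obtain ⟨B, m, rfl⟩ : ∃ B m, M = B ++ [m] := by
      simpa using (List.eq_nil_or_concat M).resolve_left (by rintro rfl; simp at hMlen)
    have hMB : HMEquiv (k ++ (B ++ [m])) (m :: (k ++ B)) := by
      simpa using HMEquiv.concat_cons (k ++ B) m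
    obtain ⟨A, hAlen, hLA⟩ := exists_hmEquiv_cons_of_nielsenC hgen hL
      (exists_isConj_of_nielsenC hL hM (List.mem_concat_self ..))
    have hAB := ih (m :: k) A B (by omega) (by simpa using hMlen)
      (hLA.nielsenC hL) (hMB.nielsenC hM)
    exact hLA.trans (hAB.trans hMB.symm)

end

theorem generator_lemma_second_general {G : Type*} [Group G] (u : ℕ)
    (C : List (ConjClasses G)) (hC : C.length = 2 * u)
    (hyp : ∀ g : Fin u → G, NielsenC C (hmBracket (List.ofFn g)) →
      ∀ i : Fin u, Subgroup.closure (g '' {j | j ≠ i}) = ⊤) :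
    ∀ g h : Fin u → G,
      NielsenC C (hmBracket (List.ofFn g)) →
      NielsenC C (hmBracket (List.ofFn h)) →
      BraidEquiv (hmBracket (List.ofFn g)) (hmBracket (List.ofFn h)) :=
  fun _ _ hg hh => hmEquiv_append_of_nielsenC
    (fun _ _ => closure_eq_top_of_nielsenC_concat hC hyp) u [] _ _ List.length_ofFn List.length_ofFn hg hh

/-- **Generator Lemma, second part.** Suppose that for every `[g_1,…,g_u] ∈ ni(G,C)`
and every `i`, the entries other than `g_i` already generate `G`. Then all H-M
representatives of `ni(G,C)` fall in one braid orbit. -/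
theorem generator_lemma_second {G : Type*} [Group G] [Finite G] (u : ℕ)
    (C : List (ConjClasses G)) (hC : C.length = 2 * u)
    (hyp : ∀ g : Fin u → G, NielsenC C (hmBracket (List.ofFn g)) →
      ∀ i : Fin u, Subgroup.closure (g '' {j | j ≠ i}) = ⊤) :
    ∀ g h : Fin u → G,
      NielsenC C (hmBracket (List.ofFn g)) →
      NielsenC C (hmBracket (List.ofFn h)) →
      BraidEquiv (hmBracket (List.ofFn g)) (hmBracket (List.ofFn h)) :=
  generator_lemma_second_general u C hC hyp
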